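/- arXiv:1404.0906 — 5 statements merged into one kernel-verified Lean document; each statement's English description precedes it below -/
import Mathlib

section
/- (Theorem 2.) Let P_{S1}, P_{S2}, δ₁, δ₂ > 0 and x, y > 0 with P_{S1}x > δ₁ and P_{S2}y > δ₂. Then P_{R,st}(x,y) := max{A(x,y), B(x,y)} is the minimum of the set {P_R ≥ 0 : γ₂(P_R) ≥ δ₁ and γ₁(P_R) ≥ δ₂}; that is, P_{R,st}(x,y) itself satisfies γ₂(P_{R,st}) ≥ δ₁ and γ₁(P_{R,st}) ≥ δ₂, and every P_R ≥ 0 satisfying both SNR constraints obeys P_R ≥ P_{R,st}(x,y). -/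
/-- Theorem 2: if `P_{S1}x > δ₁` and `P_{S2}y > δ₂`, then
`P_{R,st}(x,y) = max{A(x,y), B(x,y)}` is the minimum relay power satisfying both SNR
constraints `γ₂(P_R) ≥ δ₁` and `γ₁(P_R) ≥ δ₂`. -/
theorem min_short_term_relay_power
    (PS1 PS2 δ1 δ2 x y : ℝ)
    (hPS1 : 0 < PS1) (hPS2 : 0 < PS2) (hδ1 : 0 < δ1) (hδ2 : 0 < δ2)
    (hx : 0 < x) (hy : 0 < y)
    (hfeas1 : PS1 * x > δ1) (hfeas2 : PS2 * y > δ2) :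
    IsLeast {PR : ℝ | 0 ≤ PR ∧
        (PS1 * x * PR * y) / (PS1 * x + (PS2 + PR) * y + 1) ≥ δ1 ∧
        (PS2 * x * PR * y) / ((PS1 + PR) * x + PS2 * y + 1) ≥ δ2}
      (max (δ1 * (1 + PS1 * x + PS2 * y) / (y * (PS1 * x - δ1)))
           (δ2 * (1 + PS1 * x + PS2 * y) / (x * (PS2 * y - δ2)))) := by
  set A := δ1 * (1 + PS1 * x + PS2 * y) / (y * (PS1 * x - δ1)) with hA
  set B := δ2 * (1 + PS1 * x + PS2 * y) / (x * (PS2 * y - δ2)) with hB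
  have hyd1 : 0 < y * (PS1 * x - δ1) := mul_pos hy (by linarith)
  have hxd2 : 0 < x * (PS2 * y - δ2) := mul_pos hx (by linarith)
  have hnum : 0 < 1 + PS1 * x + PS2 * y := by nlinarith [mul_pos hPS1 hx, mul_pos hPS2 hy]
  have hApos : 0 < A := div_pos (by positivity) hyd1
  have hBpos : 0 < B := div_pos (by positivity) hxd2
  have key1 : ∀ PR : ℝ, 0 ≤ PR →
      ((PS1 * x * PR * y) / (PS1 * x + (PS2 + PR) * y + 1) ≥ δ1 ↔ A ≤ PR) := by
    intro PR hPR
    have hD : 0 < PS1 * x + (PS2 + PR) * y + 1 := by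
      nlinarith [mul_pos hPS1 hx, mul_pos hPS2 hy, mul_nonneg hPR hy.le]
    rw [ge_iff_le, le_div_iff₀ hD, hA, div_le_iff₀ hyd1]
    constructor <;> intro h <;> nlinarith
  have key2 : ∀ PR : ℝ, 0 ≤ PR →
      ((PS2 * x * PR * y) / ((PS1 + PR) * x + PS2 * y + 1) ≥ δ2 ↔ B ≤ PR) := by
    intro PR hPR
    have hD : 0 < (PS1 + PR) * x + PS2 * y + 1 := by
      nlinarith [mul_pos hPS1 hx, mul_pos hPS2 hy, mul_nonneg hPR hx.le]
    rw [ge_iff_le, le_div_iff₀ hD, hB, div_le_iff₀ hxd2]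
    constructor <;> intro h <;> nlinarith
  have hM0 : (0:ℝ) ≤ max A B := le_trans hApos.le (le_max_left _ _)
  refine ⟨⟨hM0, (key1 _ hM0).mpr (le_max_left _ _), (key2 _ hM0).mpr (le_max_right _ _)⟩, ?_⟩
  rintro PR ⟨h0, h1, h2⟩
  exact max_le ((key1 PR h0).mp h1) ((key2 PR h0).mp h2)
end

section
/- (Theorem 1, measure-theoretic form.) Let (Ω, 𝔽, μ) be a finite measure space, F ∈ 𝔽 a measurable set (the feasible states), g : Ω → [0,∞) measurable (the minimum short-term relay power), and ρ > 0. Set D = F ∩ {ω : g(ω) ≤ ρ} and P_avg = ∫_D g dμ. Then for every measurable P : Ω → [0,∞) with ∫_F P dμ ≤ P_avg, one has μ(F ∩ {ω : P(ω) ≥ g(ω)}) ≤ μ(D). Equivalently, among all relay power policies whose average power does not exceed P_avg, the truncated policy P*(ω) = g(ω)·1{g(ω) ≤ ρ} minimizes the outage probability μ(Ω) − μ(F ∩ {P ≥ g}). -/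
open MeasureTheory
open scoped ENNReal

/-- Theorem 1 (measure-theoretic form): among all relay power policies `P ≥ 0` whose
average power over the feasible set `F` does not exceed `P_avg = ∫_D g dμ`, where
`D = F ∩ {g ≤ ρ}`, the truncated policy maximizes the non-outage probability, i.e.,
`μ(F ∩ {P ≥ g}) ≤ μ(D)`. -/
theorem truncated_policy_minimizes_outage
    {Ω : Type*} [MeasurableSpace Ω] (μ : Measure Ω) [IsFiniteMeasure μ]
    (F : Set Ω) (hF : MeasurableSet F)
    (g : Ω → ℝ) (hgm : Measurable g) (hg : ∀ ω, 0 ≤ g ω)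
    (ρ : ℝ) (hρ : 0 < ρ)
    (D : Set Ω) (hD : D = F ∩ {ω | g ω ≤ ρ})
    (Pavg : ℝ≥0∞) (hPavg : Pavg = ∫⁻ ω in D, ENNReal.ofReal (g ω) ∂μ) :
    ∀ P : Ω → ℝ, Measurable P → (∀ ω, 0 ≤ P ω) →
      (∫⁻ ω in F, ENNReal.ofReal (P ω) ∂μ) ≤ Pavg →
      μ (F ∩ {ω | P ω ≥ g ω}) ≤ μ D := by
  intro P hPm hP0 hPle
  set A := F ∩ {ω | P ω ≥ g ω} with hA
  have hDm : MeasurableSet D := by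
    rw [hD]; exact hF.inter (measurableSet_le hgm measurable_const)
  have hAm : MeasurableSet A := hF.inter (measurableSet_le hgm hPm)
  set ρE := ENNReal.ofReal ρ with hρE
  have hgD : ∀ ω ∈ D, g ω ≤ ρ := by intro ω hw; rw [hD] at hw; exact hw.2
  have hgA : ∀ ω ∈ A, g ω ≤ P ω := fun ω hw => hw.2
  set X := ∫⁻ ω in A ∩ D, ENNReal.ofReal (g ω) ∂μ with hX
  have hXle : X ≤ ρE * μ (A ∩ D) := by
    rw [← setLIntegral_const]
    exact setLIntegral_mono measurable_const
      (fun ω hw => ENNReal.ofReal_le_ofReal (hgD ω hw.2))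
  have hXfin : X ≠ ∞ :=
    (hXle.trans_lt (ENNReal.mul_lt_top ENNReal.ofReal_lt_top (measure_lt_top μ _))).ne
  have hdisj : Disjoint (A ∩ D) (A \ D) :=
    Set.disjoint_left.2 fun x hx hx' => hx'.2 hx.2
  -- lower bound on ∫_F P
  have h1 : ρE * μ (A \ D) + X ≤ ∫⁻ ω in F, ENNReal.ofReal (P ω) ∂μ := by
    have hsplit : ∫⁻ ω in A, ENNReal.ofReal (P ω) ∂μ
        = (∫⁻ ω in A ∩ D, ENNReal.ofReal (P ω) ∂μ)
          + ∫⁻ ω in A \ D, ENNReal.ofReal (P ω) ∂μ := by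
      rw [← lintegral_union (hAm.diff hDm) hdisj, Set.inter_union_diff]
    have hl1 : ρE * μ (A \ D) ≤ ∫⁻ ω in A \ D, ENNReal.ofReal (P ω) ∂μ := by
      rw [← setLIntegral_const]
      refine setLIntegral_mono (hPm.ennreal_ofReal) (fun ω hw => ?_)
      refine ENNReal.ofReal_le_ofReal ?_
      have hgρ : ρ < g ω := by
        by_contra h
        exact hw.2 (by rw [hD]; exact ⟨hw.1.1, le_of_not_gt h⟩)
      exact le_trans (le_of_lt hgρ) (hgA ω hw.1)
    have hl2 : X ≤ ∫⁻ ω in A ∩ D, ENNReal.ofReal (P ω) ∂μ :=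
      setLIntegral_mono (hPm.ennreal_ofReal)
        (fun ω hw => ENNReal.ofReal_le_ofReal (hgA ω hw.1))
    calc ρE * μ (A \ D) + X
        ≤ (∫⁻ ω in A \ D, ENNReal.ofReal (P ω) ∂μ)
          + ∫⁻ ω in A ∩ D, ENNReal.ofReal (P ω) ∂μ := add_le_add hl1 hl2
      _ = ∫⁻ ω in A, ENNReal.ofReal (P ω) ∂μ := by rw [hsplit, add_comm]
      _ ≤ ∫⁻ ω in F, ENNReal.ofReal (P ω) ∂μ :=
          lintegral_mono_set Set.inter_subset_left
  -- upper bound on Pavg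
  have h2 : Pavg ≤ X + ρE * μ (D \ A) := by
    rw [hPavg]
    have hsplit : ∫⁻ ω in D, ENNReal.ofReal (g ω) ∂μ
        = (∫⁻ ω in D ∩ A, ENNReal.ofReal (g ω) ∂μ)
          + ∫⁻ ω in D \ A, ENNReal.ofReal (g ω) ∂μ := by
      rw [← lintegral_union (hDm.diff hAm)
        (Set.disjoint_left.2 fun x hx hx' => hx'.2 hx.2), Set.inter_union_diff]
    have hu : ∫⁻ ω in D \ A, ENNReal.ofReal (g ω) ∂μ ≤ ρE * μ (D \ A) := by
      rw [← setLIntegral_const]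
      exact setLIntegral_mono measurable_const
        (fun ω hw => ENNReal.ofReal_le_ofReal (hgD ω hw.1))
    rw [hsplit, Set.inter_comm]
    exact add_le_add le_rfl hu
  have key : X + ρE * μ (A \ D) ≤ X + ρE * μ (D \ A) := by
    rw [add_comm X]
    exact le_trans h1 (le_trans hPle h2)
  have hmul : ρE * μ (A \ D) ≤ ρE * μ (D \ A) :=
    (ENNReal.add_le_add_iff_left hXfin).1 key
  have hmeas : μ (A \ D) ≤ μ (D \ A) := by
    have hρ0 : ρE ≠ 0 := (ENNReal.ofReal_pos.2 hρ).ne'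
    exact (ENNReal.mul_le_mul_iff_right hρ0 ENNReal.ofReal_ne_top).1 hmul
  calc μ A = μ (A ∩ D) + μ (A \ D) := (measure_inter_add_diff A hDm).symm
    _ ≤ μ (A ∩ D) + μ (D \ A) := add_le_add le_rfl hmeas
    _ = μ (D ∩ A) + μ (D \ A) := by rw [Set.inter_comm]
    _ = μ D := measure_inter_add_diff D hAm
end

section
/- (Theorem 3, measure-theoretic form.) Let (Ω, 𝔽, μ) be a finite measure space, F ∈ 𝔽 a measurable set (the feasible states), g : Ω → [0,∞) measurable (the minimum short-term relay power), and c > 0. Set D = F ∩ {ω : g(ω) ≤ c}. Then for every measurable P : Ω → [0,∞) satisfying μ(F ∩ {ω : P(ω) ≥ g(ω)}) ≥ μ(D), one has ∫_F P dμ ≥ ∫_D g dμ. Equivalently, among all relay power policies achieving at least the non-outage probability of the truncated policy P**(ω) = g(ω)·1{g(ω) ≤ c}, the truncated policy has minimal average power. -/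
/-!
Exchange argument. Let `A = F ∩ {P ≥ g}` be the non-outage set of `P`. On `D ∩ A` we have
`g ≤ P`; the part `D \ A` where `P` fails costs at most `c · μ(D \ A)` under `g`, while
`μ(D \ A) ≤ μ(A \ D)` because `μ D ≤ μ A`, and on `A \ D` the policy `P` spends more than
`c`. Hence `∫_D g ≤ ∫_A P ≤ ∫_F P`.
-/

open MeasureTheory

section

open Set ENNReal

variable {α : Type*} [MeasurableSpace α] {μ : Measure α}

theorem measure_sdiff_le_measure_sdiff {s t : Set α} (hs : NullMeasurableSet s μ)
    (ht : NullMeasurableSet t μ) (h : μ s ≤ μ t) (hfin : μ (s ∩ t) ≠ ∞) :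
    μ (s \ t) ≤ μ (t \ s) := by
  rw [← ENNReal.add_le_add_iff_left hfin, measure_inter_add_sdiff₀ _ ht, inter_comm,
    measure_inter_add_sdiff₀ _ hs]
  exact h

theorem setLIntegral_le_setLIntegral_of_measure_le {s t : Set α} {f g : α → ℝ≥0∞} (c : ℝ≥0∞)
    (hs : MeasurableSet s) (ht : MeasurableSet t) (hμ : μ s ≤ μ t) (hfin : μ (s ∩ t) ≠ ∞)
    (hfg : ∀ x ∈ s ∩ t, f x ≤ g x) (hfc : ∀ x ∈ s \ t, f x ≤ c) (hcg : ∀ x ∈ t \ s, c ≤ g x) :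
    ∫⁻ x in s, f x ∂μ ≤ ∫⁻ x in t, g x ∂μ := by
  have hcost : ∫⁻ x in s \ t, f x ∂μ ≤ c * μ (s \ t) := by
    rw [← setLIntegral_const]
    exact setLIntegral_mono measurable_const hfc
  have hgain : c * μ (t \ s) ≤ ∫⁻ x in t \ s, g x ∂μ := by
    rw [← setLIntegral_const]
    exact setLIntegral_mono' (ht.diff hs) hcg
  calc ∫⁻ x in s, f x ∂μ
      = ∫⁻ x in s ∩ t, f x ∂μ + ∫⁻ x in s \ t, f x ∂μ := (lintegral_inter_add_sdiff _ _ ht).symm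
    _ ≤ ∫⁻ x in s ∩ t, g x ∂μ + c * μ (s \ t) :=
        add_le_add (setLIntegral_mono' (hs.inter ht) hfg) hcost
    _ ≤ ∫⁻ x in t ∩ s, g x ∂μ + c * μ (t \ s) := by
        rw [inter_comm]
        gcongr _ + c * ?_
        exact measure_sdiff_le_measure_sdiff hs.nullMeasurableSet ht.nullMeasurableSet hμ hfin
    _ ≤ ∫⁻ x in t ∩ s, g x ∂μ + ∫⁻ x in t \ s, g x ∂μ := by gcongr
    _ = ∫⁻ x in t, g x ∂μ := lintegral_inter_add_sdiff _ _ hs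

end

theorem truncated_policy_minimizes_power_general
    {Ω : Type*} [MeasurableSpace Ω] (μ : Measure Ω) [IsFiniteMeasure μ]
    (F : Set Ω) (hF : MeasurableSet F)
    (g : Ω → ℝ) (hgm : Measurable g)
    (c : ℝ)
    (D : Set Ω) (hD : D = F ∩ {ω | g ω ≤ c}) :
    ∀ P : Ω → ℝ, Measurable P → (∀ ω, 0 ≤ P ω) →
      μ (F ∩ {ω | P ω ≥ g ω}) ≥ μ D →
      (∫⁻ ω in F, ENNReal.ofReal (P ω) ∂μ) ≥ ∫⁻ ω in D, ENNReal.ofReal (g ω) ∂μ := by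
  intro P hPm _ hμ
  subst hD
  have hA : MeasurableSet (F ∩ {ω | P ω ≥ g ω}) := hF.inter (measurableSet_le hgm hPm)
  calc ∫⁻ ω in F ∩ {ω | g ω ≤ c}, ENNReal.ofReal (g ω) ∂μ
      ≤ ∫⁻ ω in F ∩ {ω | P ω ≥ g ω}, ENNReal.ofReal (P ω) ∂μ :=
        setLIntegral_le_setLIntegral_of_measure_le (ENNReal.ofReal c)
          (hF.inter (measurableSet_le hgm measurable_const)) hA hμ (measure_ne_top _ _)
          (fun _ hω => ENNReal.ofReal_le_ofReal hω.2.2)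
          (fun _ hω => ENNReal.ofReal_le_ofReal hω.1.2)
          (fun _ ⟨⟨hωF, hgP⟩, hωD⟩ =>
            ENNReal.ofReal_le_ofReal ((not_le.1 fun hgc => hωD ⟨hωF, hgc⟩).le.trans hgP))
    _ ≤ ∫⁻ ω in F, ENNReal.ofReal (P ω) ∂μ := lintegral_mono_set Set.inter_subset_left

/-- Theorem 3 (measure-theoretic form): among all relay power policies `P ≥ 0`
achieving at least the non-outage probability `μ(D)` of the truncated policy, where
`D = F ∩ {g ≤ c}`, the truncated policy has minimal average power:
`∫_F P dμ ≥ ∫_D g dμ`. -/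
theorem truncated_policy_minimizes_power
    {Ω : Type*} [MeasurableSpace Ω] (μ : Measure Ω) [IsFiniteMeasure μ]
    (F : Set Ω) (hF : MeasurableSet F)
    (g : Ω → ℝ) (hgm : Measurable g) (hg : ∀ ω, 0 ≤ g ω)
    (c : ℝ) (hc : 0 < c)
    (D : Set Ω) (hD : D = F ∩ {ω | g ω ≤ c}) :
    ∀ P : Ω → ℝ, Measurable P → (∀ ω, 0 ≤ P ω) →
      μ (F ∩ {ω | P ω ≥ g ω}) ≥ μ D →
      (∫⁻ ω in F, ENNReal.ofReal (P ω) ∂μ) ≥ ∫⁻ ω in D, ENNReal.ofReal (g ω) ∂μ :=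
  truncated_policy_minimizes_power_general μ F hF g hgm c D hD
end

section
/- (Non-outage region decomposition, eqs. (13)–(15).) Let P_{S1}, P_{S2}, δ₁, δ₂, ρ > 0 satisfy the balanced-rate condition P_{S1}/δ₁ = P_{S2}/δ₂. Then M(ρ) = M₁(ρ) ∪ M₂(ρ), where M₁(ρ) = {(x,y) : δ₁(1+(P_{S2}+ρ)y)/(P_{S1}(ρy−δ₁)) ≤ x ≤ y and y ≥ λ(ρ)} and M₂(ρ) = {(x,y) : δ₂(1+(P_{S1}+ρ)x)/(P_{S2}(ρx−δ₂)) ≤ y ≤ x and x ≥ λ(ρ)}. -/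
/-- Half-plane characterization of the non-outage region. -/
lemma nonoutage_aux (P1 P2 d1 d2 ρ lam x y : ℝ)
    (hP1 : 0 < P1) (hP2 : 0 < P2) (hd1 : 0 < d1) (hd2 : 0 < d2) (hρ : 0 < ρ)
    (hbd : d1 * P2 = d2 * P1)
    (hquad : P1 * ρ * lam ^ 2 = d1 * (P1 + P2 + ρ) * lam + d1)
    (hlam0 : 0 < lam) (hxy : x ≤ y) :
    (0 < x ∧ 0 < y ∧ P1 * x > d1 ∧ P2 * y > d2 ∧
      d1 * (1 + P1 * x + P2 * y) / (y * (P1 * x - d1)) ≤ ρ ∧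
      d2 * (1 + P1 * x + P2 * y) / (x * (P2 * y - d2)) ≤ ρ) ↔
    (d1 * (1 + (P2 + ρ) * y) / (P1 * (ρ * y - d1)) ≤ x ∧ lam ≤ y) := by
  constructor
  · rintro ⟨hx, hy, h1, h2, hA, hB⟩
    have hden : 0 < y * (P1 * x - d1) := mul_pos hy (by linarith)
    rw [div_le_iff₀ hden] at hA
    -- hA : d1 * (1 + P1*x + P2*y) ≤ ρ * (y * (P1*x - d1))
    have hry : d1 < ρ * y := by nlinarith
    constructor
    · rw [div_le_iff₀ (by nlinarith : (0:ℝ) < P1 * (ρ * y - d1))]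
      nlinarith
    · by_contra hcon
      push_neg at hcon
      have hg : d1 * (1 + (P2 + ρ) * y) ≤ P1 * y * (ρ * y - d1) := by
        nlinarith [mul_le_mul_of_nonneg_right hxy (le_of_lt (mul_pos hP1 (by linarith : (0:ℝ) < ρ * y - d1)))]
      nlinarith [hquad, mul_pos (sub_pos.2 hcon) (show (0:ℝ) < P1 * ρ * lam * y + d1 by positivity), mul_nonneg hlam0.le (sub_nonneg.2 hg)]
  · rintro ⟨hfx, hly⟩
    have hrl : d1 < ρ * lam := by
      by_contra h
      push_neg at h
      nlinarith [hquad, mul_nonneg (mul_pos hP1 hlam0).le (sub_nonneg.2 h), mul_pos (mul_pos hd1 hP2) hlam0, mul_pos (mul_pos hd1 hρ) hlam0]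
    have hy : 0 < y := lt_of_lt_of_le hlam0 hly
    have hry : d1 < ρ * y := by nlinarith
    rw [div_le_iff₀ (by nlinarith : (0:ℝ) < P1 * (ρ * y - d1))] at hfx
    -- hfx : d1 * (1 + (P2+ρ)*y) ≤ x * (P1 * (ρ*y - d1))
    have h1 : P1 * x > d1 := by
      by_contra h
      push_neg at h
      nlinarith [mul_nonneg (sub_nonneg.2 h) (by linarith : (0:ℝ) ≤ ρ * y - d1), mul_pos (mul_pos hd1 hP2) hy]
    have hx : 0 < x := by nlinarith
    have h2 : P2 * y > d2 := by
      by_contra h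
      push_neg at h
      nlinarith [mul_le_mul_of_nonneg_left h hP1.le,
        mul_lt_mul_of_pos_left (lt_of_lt_of_le h1 (mul_le_mul_of_nonneg_left hxy hP1.le)) hP2]
    have hS : (0:ℝ) < 1 + P1 * x + P2 * y := by positivity
    have hA : d1 * (1 + P1 * x + P2 * y) / (y * (P1 * x - d1)) ≤ ρ := by
      rw [div_le_iff₀ (mul_pos hy (by linarith))]
      nlinarith
    refine ⟨hx, hy, h1, h2, hA, le_trans ?_ hA⟩
    rw [div_le_div_iff₀ (mul_pos hx (by linarith)) (mul_pos hy (by linarith))]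
    have key : d1 * x * (P2 * y - d2) - d2 * y * (P1 * x - d1) = d1 * d2 * (y - x) := by
      linear_combination x * y * hbd
    nlinarith [mul_nonneg hS.le (show (0:ℝ) ≤ d1 * x * (P2 * y - d2) - d2 * y * (P1 * x - d1) by rw [key]; exact mul_nonneg (mul_pos hd1 hd2).le (sub_nonneg.2 hxy))]



/-- Non-outage region decomposition (eqs. (13)–(15)): under the balanced-rate
condition `P_{S1}/δ₁ = P_{S2}/δ₂`, the non-outage region `M(ρ)` equals
`M₁(ρ) ∪ M₂(ρ)`. -/
theorem nonoutage_region_decomposition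
    (PS1 PS2 δ1 δ2 ρ : ℝ)
    (hPS1 : 0 < PS1) (hPS2 : 0 < PS2) (hδ1 : 0 < δ1) (hδ2 : 0 < δ2) (hρ : 0 < ρ)
    (hbal : PS1 / δ1 = PS2 / δ2)
    (lam : ℝ)
    (hlam : lam = (δ2 * (PS1 + PS2 + ρ) / (2 * PS2 * ρ)) *
      (1 + Real.sqrt (1 + 4 * PS2 * ρ / (δ2 * (PS1 + PS2 + ρ) ^ 2)))) :
    {p : ℝ × ℝ | 0 < p.1 ∧ 0 < p.2 ∧ PS1 * p.1 > δ1 ∧ PS2 * p.2 > δ2 ∧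
        max (δ1 * (1 + PS1 * p.1 + PS2 * p.2) / (p.2 * (PS1 * p.1 - δ1)))
            (δ2 * (1 + PS1 * p.1 + PS2 * p.2) / (p.1 * (PS2 * p.2 - δ2))) ≤ ρ} =
      {p : ℝ × ℝ | δ1 * (1 + (PS2 + ρ) * p.2) / (PS1 * (ρ * p.2 - δ1)) ≤ p.1 ∧
          p.1 ≤ p.2 ∧ lam ≤ p.2} ∪
      {p : ℝ × ℝ | δ2 * (1 + (PS1 + ρ) * p.1) / (PS2 * (ρ * p.1 - δ2)) ≤ p.2 ∧
          p.2 ≤ p.1 ∧ lam ≤ p.1} := by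
  have hS : (0:ℝ) < PS1 + PS2 + ρ := by linarith
  have hbd : δ1 * PS2 = δ2 * PS1 := by
    field_simp at hbal
    linarith [hbal]
  have hbd' : δ2 * PS1 = δ1 * PS2 := hbd.symm
  set s := Real.sqrt (1 + 4 * PS2 * ρ / (δ2 * (PS1 + PS2 + ρ) ^ 2)) with hs_def
  have hs0 : 0 ≤ s := Real.sqrt_nonneg _
  have hs : s ^ 2 = 1 + 4 * PS2 * ρ / (δ2 * (PS1 + PS2 + ρ) ^ 2) := by
    rw [hs_def]
    exact Real.sq_sqrt (by positivity)
  have hlam0 : 0 < lam := by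
    rw [hlam]; positivity
  have h1 : 2 * PS2 * ρ * lam - δ2 * (PS1 + PS2 + ρ) = δ2 * (PS1 + PS2 + ρ) * s := by
    rw [hlam]; field_simp; ring
  have h2 : (δ2 * (PS1 + PS2 + ρ) * s) ^ 2 = δ2 ^ 2 * (PS1 + PS2 + ρ) ^ 2 + 4 * PS2 * ρ * δ2 := by
    rw [mul_pow, mul_pow, hs]
    field_simp
  have h3 : (2 * PS2 * ρ * lam - δ2 * (PS1 + PS2 + ρ)) ^ 2
      = δ2 ^ 2 * (PS1 + PS2 + ρ) ^ 2 + 4 * PS2 * ρ * δ2 := by rw [h1]; exact h2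
  have hquad2 : PS2 * ρ * lam ^ 2 = δ2 * (PS2 + PS1 + ρ) * lam + δ2 := by
    have h4 : (4 * PS2 * ρ) * (PS2 * ρ * lam ^ 2)
        = (4 * PS2 * ρ) * (δ2 * (PS2 + PS1 + ρ) * lam + δ2) := by linear_combination h3
    exact mul_left_cancel₀ (by positivity) h4
  have hquad1 : PS1 * ρ * lam ^ 2 = δ1 * (PS1 + PS2 + ρ) * lam + δ1 := by
    have h5 : (PS1 * ρ * lam ^ 2) * δ2 = (δ1 * (PS1 + PS2 + ρ) * lam + δ1) * δ2 := by
      linear_combination δ1 * hquad2 - ρ * lam ^ 2 * hbd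
    exact mul_right_cancel₀ (ne_of_gt hδ2) h5
  ext ⟨x, y⟩
  simp only [Set.mem_setOf_eq, Set.mem_union]
  have hnum : 1 + PS2 * y + PS1 * x = 1 + PS1 * x + PS2 * y := by ring
  constructor
  · rintro ⟨hx, hy, hg1, hg2, hmax⟩
    obtain ⟨hA, hB⟩ := max_le_iff.mp hmax
    rcases le_total x y with hxy | hyx
    · left
      obtain ⟨hfx, hly⟩ := (nonoutage_aux PS1 PS2 δ1 δ2 ρ lam x y hPS1 hPS2 hδ1 hδ2 hρ
        hbd hquad1 hlam0 hxy).mp ⟨hx, hy, hg1, hg2, hA, hB⟩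
      exact ⟨hfx, hxy, hly⟩
    · right
      obtain ⟨hfy, hlx⟩ := (nonoutage_aux PS2 PS1 δ2 δ1 ρ lam y x hPS2 hPS1 hδ2 hδ1 hρ
        hbd' hquad2 hlam0 hyx).mp ⟨hy, hx, hg2, hg1, by rw [hnum]; exact hB, by rw [hnum]; exact hA⟩
      exact ⟨hfy, hyx, hlx⟩
  · rintro (⟨hfx, hxy, hly⟩ | ⟨hfy, hyx, hlx⟩)
    · obtain ⟨hx, hy, hg1, hg2, hA, hB⟩ := (nonoutage_aux PS1 PS2 δ1 δ2 ρ lam x y hPS1 hPS2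
        hδ1 hδ2 hρ hbd hquad1 hlam0 hxy).mpr ⟨hfx, hly⟩
      exact ⟨hx, hy, hg1, hg2, max_le hA hB⟩
    · obtain ⟨hy, hx, hg2, hg1, hB, hA⟩ := (nonoutage_aux PS2 PS1 δ2 δ1 ρ lam y x hPS2 hPS1
        hδ2 hδ1 hρ hbd' hquad2 hlam0 hyx).mpr ⟨hfy, hlx⟩
      rw [hnum] at hA hB
      exact ⟨hx, hy, hg1, hg2, max_le hA hB⟩
end

section
/- (Minimum achievable outage probability, eq. (19).) Let P_{S1}, P_{S2}, δ₁, δ₂ > 0 satisfy the balanced-rate condition P_{S1}/δ₁ = P_{S2}/δ₂. Then, as ρ → ∞, the non-outage probability ℙ((X,Y) ∈ M(ρ)) tends to e^{−(δ₁/P_{S1})(1/Ω_X + 1/Ω_Y)}; equivalently, the outage probability P_out(ρ) = 1 − ℙ((X,Y) ∈ M(ρ)) tends to P_out^min = 1 − e^{−(δ₁/P_{S1})(1/Ω_X + 1/Ω_Y)}. -/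
/-!
Once both denominators of `A` and `B` are positive, `max (A, B)` is a finite number, so the
non-outage regions `M(ρ)` increase to the quadrant `{x > δ₁/P_{S1}, y > δ₂/P_{S2}}` as `ρ → ∞`.
By continuity of measure from below, the non-outage probability tends to
`ℙ(X > δ₁/P_{S1}) ℙ(Y > δ₂/P_{S2})`, a product of exponential tails, and the balanced-rate
condition makes both thresholds equal to `δ₁/P_{S1}`.
-/

open MeasureTheory ProbabilityTheory Filter Topology Set

lemma expMeasure_Ioi {r a : ℝ} (hr : 0 < r) (ha : 0 ≤ a) :
    expMeasure r (Ioi a) = ENNReal.ofReal (Real.exp (-(r * a))) := by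
  have := isProbabilityMeasure_expMeasure hr
  rw [← compl_Iic, prob_compl_eq_one_sub measurableSet_Iic, ← ofReal_cdf, cdf_expMeasure_eq hr,
    if_pos ha, ← ENNReal.ofReal_one,
    ← ENNReal.ofReal_sub _ (sub_nonneg.2 (Real.exp_le_one_iff.2 (by nlinarith))), sub_sub_cancel]

section Tails

variable {Ω : Type*} [MeasurableSpace Ω] {μ : Measure Ω} {X Y : Ω → ℝ} {r s a b : ℝ}

lemma measure_preimage_Ioi_of_map_eq_expMeasure (hXm : Measurable X)
    (hX : μ.map X = expMeasure r) (hr : 0 < r) (ha : 0 ≤ a) :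
    μ (X ⁻¹' Ioi a) = ENNReal.ofReal (Real.exp (-(r * a))) := by
  rw [← Measure.map_apply hXm measurableSet_Ioi, hX, expMeasure_Ioi hr ha]

lemma ProbabilityTheory.IndepFun.measure_preimage_Ioi_inter_preimage_Ioi (hindep : IndepFun X Y μ)
    (hXm : Measurable X) (hYm : Measurable Y)
    (hX : μ.map X = expMeasure r) (hY : μ.map Y = expMeasure s)
    (hr : 0 < r) (hs : 0 < s) (ha : 0 ≤ a) (hb : 0 ≤ b) :
    μ (X ⁻¹' Ioi a ∩ Y ⁻¹' Ioi b) = ENNReal.ofReal (Real.exp (-(r * a + s * b))) := by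
  rw [hindep.measure_inter_preimage_eq_mul _ _ measurableSet_Ioi measurableSet_Ioi,
    measure_preimage_Ioi_of_map_eq_expMeasure hXm hX hr ha,
    measure_preimage_Ioi_of_map_eq_expMeasure hYm hY hs hb,
    ← ENNReal.ofReal_mul (Real.exp_pos _).le, ← Real.exp_add, neg_add]

end Tails

def nonOutageRegion (PS1 PS2 δ1 δ2 ρ : ℝ) : Set (ℝ × ℝ) :=
  {p | 0 < p.1 ∧ 0 < p.2 ∧ PS1 * p.1 > δ1 ∧ PS2 * p.2 > δ2 ∧
    max (δ1 * (1 + PS1 * p.1 + PS2 * p.2) / (p.2 * (PS1 * p.1 - δ1)))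
      (δ2 * (1 + PS1 * p.1 + PS2 * p.2) / (p.1 * (PS2 * p.2 - δ2))) ≤ ρ}

section NonOutageRegion

variable {PS1 PS2 δ1 δ2 : ℝ}

lemma nonOutageRegion_monotone : Monotone (nonOutageRegion PS1 PS2 δ1 δ2) :=
  fun _ _ hρ _ ⟨hx, hy, h1, h2, hmax⟩ => ⟨hx, hy, h1, h2, hmax.trans hρ⟩

lemma iUnion_nonOutageRegion (hPS1 : 0 < PS1) (hPS2 : 0 < PS2) (hδ1 : 0 ≤ δ1) (hδ2 : 0 ≤ δ2) :
    ⋃ ρ, nonOutageRegion PS1 PS2 δ1 δ2 ρ = Ioi (δ1 / PS1) ×ˢ Ioi (δ2 / PS2) := by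
  ext ⟨x, y⟩
  simp only [mem_iUnion, nonOutageRegion, mem_ofPred_eq, mem_prod, mem_Ioi,
    div_lt_iff₀ hPS1, div_lt_iff₀ hPS2]
  constructor
  · rintro ⟨_, _, _, h1, h2, _⟩
    constructor <;> linarith
  · rintro ⟨h1, h2⟩
    exact ⟨_, by nlinarith, by nlinarith, by linarith, by linarith, le_rfl⟩

lemma tendsto_measure_preimage_nonOutageRegion {Ω : Type*} [MeasurableSpace Ω] (μ : Measure Ω)
    (Z : Ω → ℝ × ℝ) (hPS1 : 0 < PS1) (hPS2 : 0 < PS2) (hδ1 : 0 ≤ δ1) (hδ2 : 0 ≤ δ2) :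
    Tendsto (fun ρ => μ (Z ⁻¹' nonOutageRegion PS1 PS2 δ1 δ2 ρ)) atTop
      (𝓝 (μ (Z ⁻¹' Ioi (δ1 / PS1) ×ˢ Ioi (δ2 / PS2)))) := by
  have hmono : Monotone fun ρ => Z ⁻¹' nonOutageRegion PS1 PS2 δ1 δ2 ρ :=
    fun _ _ hρ => preimage_mono (nonOutageRegion_monotone hρ)
  have hlim := tendsto_measure_iUnion_atTop (μ := μ) hmono
  rwa [← preimage_iUnion, iUnion_nonOutageRegion hPS1 hPS2 hδ1 hδ2] at hlim

end NonOutageRegion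

/-- Minimum achievable outage probability (eq. (19)): as `ρ → ∞`, the non-outage
probability `ℙ((X,Y) ∈ M(ρ))` tends to `e^{−(δ₁/P_{S1})(1/Ω_X + 1/Ω_Y)}`;
equivalently the outage probability tends to
`P_out^min = 1 − e^{−(δ₁/P_{S1})(1/Ω_X + 1/Ω_Y)}`. -/
theorem minimum_outage_probability
    {Ω : Type*} [MeasurableSpace Ω] (μ : Measure Ω) [IsProbabilityMeasure μ]
    (X Y : Ω → ℝ) (hXm : Measurable X) (hYm : Measurable Y)
    (ΩX ΩY : ℝ) (hΩX : 0 < ΩX) (hΩY : 0 < ΩY)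
    (hX : Measure.map X μ = expMeasure (1 / ΩX))
    (hY : Measure.map Y μ = expMeasure (1 / ΩY))
    (hindep : IndepFun X Y μ)
    (PS1 PS2 δ1 δ2 : ℝ)
    (hPS1 : 0 < PS1) (hPS2 : 0 < PS2) (hδ1 : 0 < δ1) (hδ2 : 0 < δ2)
    (hbal : PS1 / δ1 = PS2 / δ2)
    (M : ℝ → Set (ℝ × ℝ))
    (hM : ∀ ρ, M ρ = {p : ℝ × ℝ | 0 < p.1 ∧ 0 < p.2 ∧ PS1 * p.1 > δ1 ∧ PS2 * p.2 > δ2 ∧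
        max (δ1 * (1 + PS1 * p.1 + PS2 * p.2) / (p.2 * (PS1 * p.1 - δ1)))
            (δ2 * (1 + PS1 * p.1 + PS2 * p.2) / (p.1 * (PS2 * p.2 - δ2))) ≤ ρ}) :
    Tendsto (fun ρ : ℝ => (μ {ω | (X ω, Y ω) ∈ M ρ}).toReal) atTop
        (𝓝 (Real.exp (-(δ1 / PS1) * (1 / ΩX + 1 / ΩY)))) ∧
    Tendsto (fun ρ : ℝ => 1 - (μ {ω | (X ω, Y ω) ∈ M ρ}).toReal) atTop
        (𝓝 (1 - Real.exp (-(δ1 / PS1) * (1 / ΩX + 1 / ΩY)))) := by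
  have hthreshold : δ2 / PS2 = δ1 / PS1 := by
    rw [div_eq_div_iff hδ1.ne' hδ2.ne'] at hbal
    rw [div_eq_div_iff hPS2.ne' hPS1.ne']
    linarith
  have hquadrant : μ (X ⁻¹' Ioi (δ1 / PS1) ∩ Y ⁻¹' Ioi (δ2 / PS2)) =
      ENNReal.ofReal (Real.exp (-(δ1 / PS1) * (1 / ΩX + 1 / ΩY))) := by
    rw [hindep.measure_preimage_Ioi_inter_preimage_Ioi hXm hYm hX hY (by positivity)
      (by positivity) (by positivity) (by positivity), hthreshold]
    ring_nf
  have hlim := tendsto_measure_preimage_nonOutageRegion μ (fun ω => (X ω, Y ω))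
    hPS1 hPS2 hδ1.le hδ2.le
  rw [mk_preimage_prod, hquadrant] at hlim
  have hnonOutage := (ENNReal.tendsto_toReal ENNReal.ofReal_ne_top).comp hlim
  rw [ENNReal.toReal_ofReal (Real.exp_pos _).le] at hnonOutage
  obtain rfl : M = nonOutageRegion PS1 PS2 δ1 δ2 := funext hM
  exact ⟨hnonOutage, tendsto_const_nhds.sub hnonOutage⟩
end
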